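/- arXiv:2505.10503 — 2 statements merged into one kernel-verified Lean document; each statement's English description precedes it below -/
import Mathlib

section
/- Let N ≥ 3 and p > 1. Assume condition (K0), that f is a nonnegative continuous function on (0,∞) with ∫₀¹ r f(r) dr < ∞, and μ ≥ 0. Let u ∈ C²((0,r_1)) be a positive solution of u'' + ((N-1)/r)u' + K(r)u^p + μ f(r) = 0 on (0, r_1) for some r_1 > 0 such that lim_{r→0+} u(r) exists in (0, ∞]. Then there exist r_0 ∈ (0, r_1] and C_0 > 0 such that r^θ u(r) ≤ C_0 for all r ∈ (0, r_0). -/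
/-! In the bounded case `r^θ u(r) → 0`. In the singular case the flux `r^(N-1) u'` is
nonincreasing, since `(r^(N-1) u')' = -r^(N-1) (K u^p + μ f) ≤ 0`; as `u` blows up at `0`, `u'`
cannot be positive anywhere (`u` would then increase on `(0, r]`), so `u` is decreasing.
Integrating the equation over `[ρ/2, ρ]`, with `K(s) ≥ k0 s^α / 2` and `u(s) ≥ u(ρ)`, gives
`-ρ^(N-1) u'(ρ) ≥ c ρ^(N+α) u(ρ)^p`, and integrating `u'` over `[ρ, 2ρ]` gives
`u(ρ) ≥ ρ (-ρ^(N-1) u'(ρ)) / (2ρ)^(N-1)`. Hence `c' ρ^(2+α) u(ρ)^p ≤ u(ρ)`, that is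
`ρ^θ u(ρ) ≤ c'^(-1/(p-1))`. -/

open Real Filter Set MeasureTheory Topology

noncomputable section

/-- The critical Sobolev exponent `p_S(α) = (N+2+2α)/(N-2)`. -/
def pS (N : ℕ) (α : ℝ) : ℝ := ((N : ℝ) + 2 + 2 * α) / ((N : ℝ) - 2)

/-- The condition `p < p_JL(α)` where `p_JL` is the Joseph–Lundgren exponent
(`p_JL(α) = ∞` if `N ≤ 10 + 4α`). -/
def ltPJL (N : ℕ) (α p : ℝ) : Prop :=
  (N : ℝ) ≤ 10 + 4 * α ∨
    (10 + 4 * α < (N : ℝ) ∧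
      p < 1 + 2 * (2 + α) / ((N : ℝ) - 4 - α - Real.sqrt ((2 + α) * (2 * (N : ℝ) - 2 + α))))

/-- `θ = (2+α)/(p-1)`. -/
def θconst (p α : ℝ) : ℝ := (2 + α) / (p - 1)

/-- `γ = (θ(N-2-θ)/k0)^{1/(p-1)}`. -/
def γconst (N : ℕ) (p α k0 : ℝ) : ℝ :=
  (θconst p α * ((N : ℝ) - 2 - θconst p α) / k0) ^ (1 / (p - 1))

/-- Condition (K0): `K` positive continuous on `(0,∞)`, `α > -2`, `k0 > 0`,
`r^{-α} K(r) → k0` as `r → 0+`. -/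
def CondK0 (K : ℝ → ℝ) (α k0 : ℝ) : Prop :=
  (∀ r : ℝ, 0 < r → 0 < K r) ∧ ContinuousOn K (Ioi 0) ∧ -2 < α ∧ 0 < k0 ∧
    Tendsto (fun r : ℝ => r ^ (-α) * K r) (𝓝[>] 0) (𝓝 k0)

/-- Condition (f0): `f` nonnegative continuous on `(0,∞)`, not identically zero,
with `f(r) ≤ C r^ν` near `0` for some `ν > -2`. -/
def CondF0 (f : ℝ → ℝ) : Prop :=
  ContinuousOn f (Ioi 0) ∧ (∀ r : ℝ, 0 < r → 0 ≤ f r) ∧ (∃ r : ℝ, 0 < r ∧ f r ≠ 0) ∧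
    ∃ ν : ℝ, -2 < ν ∧ ∃ C : ℝ, 0 < C ∧ ∃ ρ0 : ℝ, 0 < ρ0 ∧
      ∀ r : ℝ, 0 < r → r < ρ0 → f r ≤ C * r ^ ν

/-- Condition (K∞): `β > -2`, `k∞ > 0`, `r^{-β}K(r) → k∞` as `r → ∞`. -/
def CondKinf (K : ℝ → ℝ) (β kinf : ℝ) : Prop :=
  -2 < β ∧ 0 < kinf ∧ Tendsto (fun r : ℝ => r ^ (-β) * K r) atTop (𝓝 kinf)

/-- Condition (f∞): `f(r) ≤ C r^{-q}` for large `r`, for some `q > N`. -/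
def CondFinf (N : ℕ) (f : ℝ → ℝ) : Prop :=
  ∃ q : ℝ, (N : ℝ) < q ∧ ∃ C : ℝ, 0 < C ∧ ∃ R0 : ℝ, 0 < R0 ∧
    ∀ r : ℝ, R0 < r → f r ≤ C * r ^ (-q)

/-- `u` is a positive `C²` solution of `u'' + (N-1)/r u' + K u^p + μ f = 0` on `s`. -/
def SolOn (N : ℕ) (p μ : ℝ) (K f u : ℝ → ℝ) (s : Set ℝ) : Prop :=
  ContDiffOn ℝ 2 u s ∧ (∀ r ∈ s, 0 < u r) ∧
    ∀ r ∈ s, deriv (deriv u) r + ((N : ℝ) - 1) / r * deriv u r + K r * u r ^ p + μ * f r = 0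

/-- Bounded solution of (E): solution on `(0,∞)` with a finite limit at `0+`. -/
def BoundedSol (N : ℕ) (p μ : ℝ) (K f u : ℝ → ℝ) : Prop :=
  SolOn N p μ K f u (Ioi 0) ∧ ∃ l : ℝ, Tendsto u (𝓝[>] 0) (𝓝 l)

/-- Singular solution of (E): solution on `(0,∞)` with `u(r) → ∞` as `r → 0+`. -/
def SingularSol (N : ℕ) (p μ : ℝ) (K f u : ℝ → ℝ) : Prop :=
  SolOn N p μ K f u (Ioi 0) ∧ Tendsto u (𝓝[>] 0) atTop

/-- `‖u‖_∞ = sup_{r>0} u(r)`. -/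
def supNorm (u : ℝ → ℝ) : ℝ := ⨆ r : Ioi (0 : ℝ), u r.1

/-- Fast decay: `limsup_{r→∞} r^{N-2} u(r) < ∞`. -/
def FastDecay (N : ℕ) (u : ℝ → ℝ) : Prop :=
  ∃ M : ℝ, ∀ᶠ r in atTop, r ^ ((N : ℝ) - 2) * u r ≤ M

/-- Slow decay: `limsup_{r→∞} r^{N-2} u(r) = ∞`. -/
def SlowDecay (N : ℕ) (u : ℝ → ℝ) : Prop :=
  ∀ M : ℝ, ∃ᶠ r in atTop, M < r ^ ((N : ℝ) - 2) * u r

def radialFlux (N : ℕ) (u : ℝ → ℝ) (r : ℝ) : ℝ := r ^ ((N : ℝ) - 1) * deriv u r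

section RadialFlux

variable {N : ℕ} {p μ r1 : ℝ} {K f u : ℝ → ℝ}

theorem SolOn.hasDerivAt_radialFlux (hu : SolOn N p μ K f u (Ioo 0 r1)) {r : ℝ}
    (hr : r ∈ Ioo 0 r1) :
    HasDerivAt (radialFlux N u) (-(r ^ ((N : ℝ) - 1) * (K r * u r ^ p + μ * f r))) r := by
  have hu' : ContDiffOn ℝ 1 (deriv u) (Ioo 0 r1) := hu.1.deriv_of_isOpen isOpen_Ioo (by norm_num)
  have hu'' : HasDerivAt (deriv u) (deriv (deriv u) r) r :=
    ((hu'.differentiableOn one_ne_zero).differentiableAt (isOpen_Ioo.mem_nhds hr)).hasDerivAt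
  have hpow : HasDerivAt (fun s : ℝ => s ^ ((N : ℝ) - 1))
      (((N : ℝ) - 1) * r ^ ((N : ℝ) - 1 - 1)) r := Real.hasDerivAt_rpow_const (Or.inl hr.1.ne')
  refine (hpow.mul hu'').congr_deriv ?_
  rw [Real.rpow_sub_one hr.1.ne']
  linear_combination r ^ ((N : ℝ) - 1) * hu.2.2 r hr

theorem SolOn.mul_sub_le_radialFlux_sub (hu : SolOn N p μ K f u (Ioo 0 r1)) {a b m : ℝ}
    (ha : 0 < a) (hab : a ≤ b) (hb : b < r1)
    (hm : ∀ s ∈ Icc a b, m ≤ s ^ ((N : ℝ) - 1) * (K s * u s ^ p + μ * f s)) :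
    m * (b - a) ≤ radialFlux N u a - radialFlux N u b := by
  have hsub : Icc a b ⊆ Ioo 0 r1 := fun s hs => ⟨ha.trans_le hs.1, hs.2.trans_lt hb⟩
  have hderiv : ∀ s ∈ Icc a b, HasDerivAt (fun r => -radialFlux N u r)
      (s ^ ((N : ℝ) - 1) * (K s * u s ^ p + μ * f s)) s := fun s hs =>
    (hu.hasDerivAt_radialFlux (hsub hs)).fun_neg.congr_deriv (neg_neg _)
  have := (convex_Icc a b).mul_sub_le_image_sub_of_le_deriv
    (fun s hs => (hderiv s hs).continuousAt.continuousWithinAt)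
    (fun s hs => (hderiv s (interior_subset hs)).differentiableAt.differentiableWithinAt)
    (fun s hs => ((hderiv s (interior_subset hs)).deriv).symm ▸ hm s (interior_subset hs))
    a (left_mem_Icc.2 hab) b (right_mem_Icc.2 hab) hab
  linarith

theorem SolOn.antitoneOn_radialFlux (hu : SolOn N p μ K f u (Ioo 0 r1))
    (hK : ∀ r, 0 < r → 0 < K r) (hμ : 0 ≤ μ) (hf : ∀ r, 0 < r → 0 ≤ f r) :
    AntitoneOn (radialFlux N u) (Ioo 0 r1) := by
  intro a ha b hb hab
  have := hu.mul_sub_le_radialFlux_sub ha.1 hab hb.2 (m := 0) fun s hs => by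
    have hs0 : 0 < s := ha.1.trans_le hs.1
    have := hu.2.1 s ⟨hs0, hs.2.trans_lt hb.2⟩
    have := hf s hs0
    have := hK s hs0
    positivity
  linarith

theorem deriv_nonpos_of_antitoneOn_radialFlux (hd : DifferentiableOn ℝ u (Ioo 0 r1))
    (hF : AntitoneOn (radialFlux N u) (Ioo 0 r1)) (htop : Tendsto u (𝓝[>] 0) atTop) :
    ∀ r ∈ Ioo 0 r1, deriv u r ≤ 0 := by
  intro r hr
  by_contra! hpos
  have hsub : Ioc 0 r ⊆ Ioo 0 r1 := fun s hs => ⟨hs.1, hs.2.trans_lt hr.2⟩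
  have hmono : MonotoneOn u (Ioc 0 r) := by
    refine monotoneOn_of_deriv_nonneg (convex_Ioc 0 r) (hd.continuousOn.mono hsub)
      (hd.mono (interior_subset.trans hsub)) fun s hs => ?_
    rw [interior_Ioc] at hs
    have hflux := hF (hsub (Ioo_subset_Ioc_self hs)) hr hs.2.le
    have : 0 < radialFlux N u r := mul_pos (Real.rpow_pos_of_pos hr.1 _) hpos
    exact (pos_of_mul_pos_right (this.trans_le hflux) (Real.rpow_nonneg hs.1.le _)).le
  obtain ⟨s, hus, hs⟩ :=
    ((htop.eventually_gt_atTop (u r)).and (Ioo_mem_nhdsGT hr.1)).exists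
  exact (hmono ⟨hs.1, hs.2.le⟩ ⟨hr.1, le_rfl⟩ hs.2.le).not_gt hus

theorem le_sub_of_antitoneOn_radialFlux (hN : 1 ≤ N) (hd : DifferentiableOn ℝ u (Ioo 0 r1))
    (hF : AntitoneOn (radialFlux N u) (Ioo 0 r1)) {a b : ℝ} (ha : 0 < a) (hab : a ≤ b)
    (hb : b < r1) (hua : deriv u a ≤ 0) :
    (b - a) * (-radialFlux N u a / b ^ ((N : ℝ) - 1)) ≤ u a - u b := by
  have hsub : Icc a b ⊆ Ioo 0 r1 := fun s hs => ⟨ha.trans_le hs.1, hs.2.trans_lt hb⟩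
  have hn : (0 : ℝ) ≤ (N : ℝ) - 1 := sub_nonneg.2 (by exact_mod_cast hN)
  have hFa : 0 ≤ -radialFlux N u a :=
    neg_nonneg.2 (mul_nonpos_of_nonneg_of_nonpos (Real.rpow_nonneg ha.le _) hua)
  have := (convex_Icc a b).image_sub_le_mul_sub_of_deriv_le (hd.continuousOn.mono hsub)
    (hd.mono (interior_subset.trans hsub)) (C := radialFlux N u a / b ^ ((N : ℝ) - 1))
    (fun s hs => by
      rw [interior_Icc] at hs
      have hs0 : 0 < s := ha.trans hs.1
      have hsn : 0 < s ^ ((N : ℝ) - 1) := Real.rpow_pos_of_pos hs0 _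
      have hflux : radialFlux N u s ≤ radialFlux N u a :=
        hF (hsub (left_mem_Icc.2 hab)) (hsub (Ioo_subset_Icc_self hs)) hs.1.le
      have hpow : s ^ ((N : ℝ) - 1) ≤ b ^ ((N : ℝ) - 1) :=
        Real.rpow_le_rpow hs0.le hs.2.le hn
      calc deriv u s = radialFlux N u s / s ^ ((N : ℝ) - 1) := by
            rw [radialFlux]; field_simp
        _ ≤ radialFlux N u a / s ^ ((N : ℝ) - 1) := div_le_div_of_nonneg_right hflux hsn.le
        _ ≤ radialFlux N u a / b ^ ((N : ℝ) - 1) := by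
            rw [← neg_le_neg_iff, ← neg_div, ← neg_div]
            exact div_le_div_of_nonneg_left hFa hsn hpow)
    a (left_mem_Icc.2 hab) b (right_mem_Icc.2 hab) hab
  rw [neg_div]
  linarith

end RadialFlux

theorem CondK0.eventually_mul_rpow_le {K : ℝ → ℝ} {α k0 c : ℝ} (hK : CondK0 K α k0)
    (hc : c < k0) : ∀ᶠ r in 𝓝[>] 0, c * r ^ α ≤ K r := by
  filter_upwards [hK.2.2.2.2.eventually_const_lt hc, self_mem_nhdsWithin] with r hr hr0
  have hrα : 0 < r ^ α := Real.rpow_pos_of_pos hr0 α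
  rw [Real.rpow_neg hr0.le, inv_mul_eq_div, lt_div_iff₀ hrα] at hr
  exact hr.le

theorem rpow_θconst_mul_le {p α c ρ x : ℝ} (hp : 1 < p) (hc : 0 < c) (hρ : 0 < ρ) (hx : 0 < x)
    (h : c * ρ ^ (2 + α) * x ^ p ≤ x) : ρ ^ θconst p α * x ≤ c⁻¹ ^ (p - 1)⁻¹ := by
  have hp0 : 0 < p - 1 := sub_pos.2 hp
  have hρα : 0 < ρ ^ (2 + α) := Real.rpow_pos_of_pos hρ _
  have hxp : x ^ p = x ^ (p - 1) * x := by
    rw [← Real.rpow_add_one hx.ne', sub_add_cancel]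
  have hle : ρ ^ (2 + α) * x ^ (p - 1) ≤ c⁻¹ := by
    have hmul : c * (ρ ^ (2 + α) * x ^ (p - 1)) * x ≤ 1 * x := by
      rw [one_mul]
      calc c * (ρ ^ (2 + α) * x ^ (p - 1)) * x = c * ρ ^ (2 + α) * x ^ p := by rw [hxp]; ring
        _ ≤ x := h
    rw [← one_div, le_div_iff₀' hc]
    exact le_of_mul_le_mul_right hmul hx
  calc ρ ^ θconst p α * x = (ρ ^ (2 + α) * x ^ (p - 1)) ^ (p - 1)⁻¹ := by
        rw [Real.mul_rpow hρα.le (by positivity), ← Real.rpow_mul hρ.le, ← Real.rpow_mul hx.le,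
          mul_inv_cancel₀ hp0.ne', Real.rpow_one, θconst, div_eq_mul_inv]
    _ ≤ c⁻¹ ^ (p - 1)⁻¹ := Real.rpow_le_rpow (by positivity) hle (by positivity)

theorem SolOn.mul_rpow_le_neg_radialFlux {N : ℕ} {p μ α c ρ r1 : ℝ} {K f u : ℝ → ℝ}
    (hu : SolOn N p μ K f u (Ioo 0 r1)) (hp : 0 ≤ p) (hμ : 0 ≤ μ) (hf : ∀ r, 0 < r → 0 ≤ f r)
    (hnα : 0 ≤ (N : ℝ) - 1 + α) (hc : 0 ≤ c) (hρ : 0 < ρ) (hρr1 : ρ < r1)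
    (hKc : ∀ s ∈ Icc (ρ / 2) ρ, c * s ^ α ≤ K s) (hanti : AntitoneOn u (Ioo 0 r1))
    (hderiv : deriv u (ρ / 2) ≤ 0) :
    ρ / 2 * (c * (ρ / 2) ^ ((N : ℝ) - 1 + α) * u ρ ^ p) ≤ -radialFlux N u ρ := by
  have hρmem : ρ ∈ Ioo 0 r1 := ⟨hρ, hρr1⟩
  have huρ : 0 ≤ u ρ ^ p := Real.rpow_nonneg (hu.2.1 ρ hρmem).le _
  have hsource : ∀ s ∈ Icc (ρ / 2) ρ,
      c * (ρ / 2) ^ ((N : ℝ) - 1 + α) * u ρ ^ p ≤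
        s ^ ((N : ℝ) - 1) * (K s * u s ^ p + μ * f s) := by
    intro s hs
    have hs0 : 0 < s := (half_pos hρ).trans_le hs.1
    have hupow : u ρ ^ p ≤ u s ^ p := Real.rpow_le_rpow (hu.2.1 ρ hρmem).le
      (hanti ⟨hs0, hs.2.trans_lt hρr1⟩ hρmem hs.2) hp
    have hKs : 0 ≤ K s := le_trans (by positivity) (hKc s hs)
    calc c * (ρ / 2) ^ ((N : ℝ) - 1 + α) * u ρ ^ p
        ≤ c * s ^ ((N : ℝ) - 1 + α) * u ρ ^ p := by gcongr; exact hs.1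
      _ = s ^ ((N : ℝ) - 1) * (c * s ^ α * u ρ ^ p) := by rw [Real.rpow_add hs0]; ring
      _ ≤ s ^ ((N : ℝ) - 1) * (K s * u s ^ p + μ * f s) := by
          refine mul_le_mul_of_nonneg_left (le_add_of_le_of_nonneg ?_ (mul_nonneg hμ (hf s hs0)))
            (Real.rpow_nonneg hs0.le _)
          exact mul_le_mul (hKc s hs) hupow huρ hKs
  have hflux := hu.mul_sub_le_radialFlux_sub (half_pos hρ) (half_le_self hρ.le) hρr1 hsource
  have : radialFlux N u (ρ / 2) ≤ 0 :=
    mul_nonpos_of_nonneg_of_nonpos (Real.rpow_nonneg (half_pos hρ).le _) hderiv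
  linarith

theorem SolOn.exists_mul_rpow_le_of_tendsto_atTop {N : ℕ} {p μ α k0 r1 : ℝ} {K f u : ℝ → ℝ}
    (hN : 3 ≤ N) (hp : 0 ≤ p) (hμ : 0 ≤ μ) (hK : CondK0 K α k0) (hf : ∀ r, 0 < r → 0 ≤ f r)
    (hr1 : 0 < r1) (hu : SolOn N p μ K f u (Ioo 0 r1)) (htop : Tendsto u (𝓝[>] 0) atTop) :
    ∃ c > 0, ∀ᶠ ρ in 𝓝[>] 0, c * ρ ^ (2 + α) * u ρ ^ p ≤ u ρ := by
  have hN' : (3 : ℝ) ≤ N := by exact_mod_cast hN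
  have hk0 : 0 < k0 := hK.2.2.2.1
  have hd : DifferentiableOn ℝ u (Ioo 0 r1) := hu.1.differentiableOn two_ne_zero
  have hF := hu.antitoneOn_radialFlux hK.1 hμ hf
  have hderiv := deriv_nonpos_of_antitoneOn_radialFlux hd hF htop
  have hanti : AntitoneOn u (Ioo 0 r1) :=
    antitoneOn_of_deriv_nonpos (convex_Ioo 0 r1) hd.continuousOn (by rwa [interior_Ioo])
      (by rwa [interior_Ioo])
  obtain ⟨δ, hδ, hKδ⟩ :=
    (nhdsGT_basis 0).eventually_iff.1 (hK.eventually_mul_rpow_le (half_lt_self hk0))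
  refine ⟨k0 / (4 * 2 ^ ((N : ℝ) - 1 + α) * 2 ^ ((N : ℝ) - 1)), by positivity, ?_⟩
  filter_upwards [Ioo_mem_nhdsGT (lt_min hδ (half_pos hr1))] with ρ hρ
  have hρ0 : 0 < ρ := hρ.1
  have hρr1 : 2 * ρ < r1 := by linarith [hρ.2.trans_le (min_le_right _ _)]
  have hρmem : ρ ∈ Ioo 0 r1 := ⟨hρ0, by linarith⟩
  have hA := hu.mul_rpow_le_neg_radialFlux hp hμ hf (by linarith [hK.2.2.1]) (half_pos hk0).le
    hρ0 hρmem.2 (fun s hs => hKδ ⟨(half_pos hρ0).trans_le hs.1,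
      hs.2.trans_lt (hρ.2.trans_le (min_le_left _ _))⟩)
    hanti (hderiv _ ⟨half_pos hρ0, by linarith⟩)
  have hB := le_sub_of_antitoneOn_radialFlux (by omega) hd hF hρ0 (by linarith) hρr1
    (hderiv ρ hρmem)
  have hu2ρ : 0 < u (2 * ρ) := hu.2.1 _ ⟨by positivity, hρr1⟩
  calc k0 / (4 * 2 ^ ((N : ℝ) - 1 + α) * 2 ^ ((N : ℝ) - 1)) * ρ ^ (2 + α) * u ρ ^ p
      = (2 * ρ - ρ) * (ρ / 2 * (k0 / 2 * (ρ / 2) ^ ((N : ℝ) - 1 + α) * u ρ ^ p) /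
          (2 * ρ) ^ ((N : ℝ) - 1)) := by
        have hρn : 0 < ρ ^ ((N : ℝ) - 1) := Real.rpow_pos_of_pos hρ0 _
        rw [Real.div_rpow hρ0.le zero_le_two, Real.mul_rpow zero_le_two hρ0.le,
          Real.rpow_add hρ0, Real.rpow_add hρ0, Real.rpow_two]
        field_simp
        ring
    _ ≤ (2 * ρ - ρ) * (-radialFlux N u ρ / (2 * ρ) ^ ((N : ℝ) - 1)) := by gcongr; linarith
    _ ≤ u ρ := by linarith

theorem tendsto_rpow_mul_nhdsGT_zero {u : ℝ → ℝ} {θ l : ℝ} (hθ : 0 < θ)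
    (hu : Tendsto u (𝓝[>] 0) (𝓝 l)) : Tendsto (fun r => r ^ θ * u r) (𝓝[>] 0) (𝓝 0) := by
  have hpow : Tendsto (fun r : ℝ => r ^ θ) (𝓝[>] 0) (𝓝 0) := by
    simpa [Real.zero_rpow hθ.ne'] using
      (Real.continuousAt_rpow_const 0 θ (Or.inr hθ.le)).tendsto.mono_left nhdsWithin_le_nhds
  simpa using hpow.mul hu

theorem stmt6_general (N : ℕ) (p μ α k0 r1 : ℝ) (K f u : ℝ → ℝ)
    (hN : 3 ≤ N) (hp1 : 1 < p) (hμ : 0 ≤ μ)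
    (hK : CondK0 K α k0)
    (hfnn : ∀ r : ℝ, 0 < r → 0 ≤ f r)
    (hr1 : 0 < r1)
    (hu : SolOn N p μ K f u (Ioo 0 r1))
    (hlim : (∃ l : ℝ, 0 < l ∧ Tendsto u (𝓝[>] 0) (𝓝 l)) ∨ Tendsto u (𝓝[>] 0) atTop) :
    ∃ r0 : ℝ, 0 < r0 ∧ r0 ≤ r1 ∧ ∃ C0 : ℝ, 0 < C0 ∧
      ∀ r : ℝ, 0 < r → r < r0 → r ^ θconst p α * u r ≤ C0 := by
  obtain ⟨C, hC⟩ : ∃ C, ∀ᶠ r in 𝓝[>] 0, r ^ θconst p α * u r ≤ C := by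
    rcases hlim with ⟨l, -, hl⟩ | htop
    · have hθ : 0 < θconst p α := div_pos (by linarith [hK.2.2.1]) (by linarith)
      exact ⟨1, ((tendsto_rpow_mul_nhdsGT_zero hθ hl).eventually_lt_const one_pos).mono
        fun _ => le_of_lt⟩
    · obtain ⟨c, hc, hcu⟩ :=
        hu.exists_mul_rpow_le_of_tendsto_atTop hN (by linarith) hμ hK hfnn hr1 htop
      refine ⟨c⁻¹ ^ (p - 1)⁻¹, ?_⟩
      filter_upwards [hcu, Ioo_mem_nhdsGT hr1] with r hr hr0
      exact rpow_θconst_mul_le hp1 hc hr0.1 (hu.2.1 r hr0) hr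
  obtain ⟨ε, hε, hCε⟩ := (nhdsGT_basis 0).eventually_iff.1 hC
  refine ⟨min ε r1, lt_min hε hr1, min_le_right _ _, max C 1, by positivity, ?_⟩
  exact fun r hr hrε => (hCε ⟨hr, hrε.trans_le (min_le_left _ _)⟩).trans (le_max_left _ _)

/-- Lemma 2.1 (i): a priori bound `r^θ u(r) ≤ C₀` near `0` for
positive solutions with a (possibly infinite) limit at `0+`. -/
theorem stmt6 (N : ℕ) (p μ α k0 r1 : ℝ) (K f u : ℝ → ℝ)
    (hN : 3 ≤ N) (hp1 : 1 < p) (hμ : 0 ≤ μ)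
    (hK : CondK0 K α k0)
    (hfc : ContinuousOn f (Ioi 0)) (hfnn : ∀ r : ℝ, 0 < r → 0 ≤ f r)
    (hfint : IntegrableOn (fun r : ℝ => r * f r) (Ioo 0 1))
    (hr1 : 0 < r1)
    (hu : SolOn N p μ K f u (Ioo 0 r1))
    (hlim : (∃ l : ℝ, 0 < l ∧ Tendsto u (𝓝[>] 0) (𝓝 l)) ∨ Tendsto u (𝓝[>] 0) atTop) :
    ∃ r0 : ℝ, 0 < r0 ∧ r0 ≤ r1 ∧ ∃ C0 : ℝ, 0 < C0 ∧
      ∀ r : ℝ, 0 < r → r < r0 → r ^ θconst p α * u r ≤ C0 :=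
  stmt6_general N p μ α k0 r1 K f u hN hp1 hμ hK hfnn hr1 hu hlim
end
end

section
/- Suppose N ≥ 3, conditions (K0), (K∞), (f0), (f∞) hold, p > max{p_S(α), p_S(β)}, and μ ≥ 0. Assume u*_μ(r) > 0 for all r > 0 and limsup_{r→∞} r^{N-2} u*_μ(r) < ∞. Then the limit η(μ) := lim_{r→∞} r^{N-2} u*_μ(r) exists, and for all r > 0: (u*_μ)'(r) = r^{1-N} ( -(N-2)η(μ) + ∫_r^∞ s^{N-1}(K(s)u*_μ(s)^p + μ f(s)) ds ) and u*_μ(r) = r^{2-N} η(μ) - (1/(N-2)) ∫_r^∞ (r^{2-N} - t^{2-N}) t^{N-1} (K(t)u*_μ(t)^p + μ f(t)) dt. Furthermore, the function r ↦ r^{N-2} u*_μ(r) is strictly increasing on (0,∞). -/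
open Real Filter Set MeasureTheory Topology

noncomputable section

/-- `u` solves `u'' + (N-1)/r u' + K(r) max{u,0}^p + μ f = 0` on `(0,∞)` with
`r^θ u(r) → γ` as `r → 0+` (the defining property of `u*_μ`). -/
def SingAux (N : ℕ) (p μ α k0 : ℝ) (K f u : ℝ → ℝ) : Prop :=
  ContDiffOn ℝ 2 u (Ioi 0) ∧
    (∀ r : ℝ, 0 < r →
      deriv (deriv u) r + ((N : ℝ) - 1) / r * deriv u r
        + K r * (max (u r) 0) ^ p + μ * f r = 0) ∧
    Tendsto (fun r : ℝ => r ^ θconst p α * u r) (𝓝[>] 0) (𝓝 (γconst N p α k0))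

/-!
Write `g = K u^p + μ f > 0`. Fast decay, `(K∞)`, `(f∞)` and `p > p_S(β)` make `t^{N-1} g(t)`
integrable at infinity. Integrating `(r^{N-1} u')' = -r^{N-1} g` from `r` to `∞` gives `u'` up to
a constant, which defines `η`; the second formula follows because both sides have the same
derivative and vanish at infinity. In that representation
`r^{N-2} u(r) = η - (Φ(r) - r^{N-2} G(r))/(N-2)` with `Φ(r) = ∫_r^∞ t^{N-1} g` and
`G(r) = ∫_r^∞ t g`; since `0 ≤ r^{N-2} G ≤ Φ → 0` this tends to `η`, and its derivative is
`r^{N-3} G(r) > 0`.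
-/

open Asymptotics

theorem hasDerivAt_integral_Ioi {v : ℝ → ℝ} {c r : ℝ} (hv : IntegrableOn v (Ioi c))
    (hcr : c < r) (hvr : ContinuousAt v r) :
    HasDerivAt (fun x => ∫ t in Ioi x, v t) (-v r) r := by
  have hsplit : (fun x => (∫ t in Ioi c, v t) - ∫ t in c..x, v t) =ᶠ[𝓝 r]
      fun x => ∫ t in Ioi x, v t := by
    filter_upwards [Ioi_mem_nhds hcr] with x hx
    rw [← intervalIntegral.integral_Ioi_sub_Ioi hv hx.le, sub_sub_cancel]
  have hprim := intervalIntegral.integral_hasDerivAt_right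
    ((intervalIntegrable_iff_integrableOn_Ioc_of_le hcr.le).2 (hv.mono_set Ioc_subset_Ioi_self))
    ⟨Ioi c, Ioi_mem_nhds hcr, hv.aestronglyMeasurable⟩ hvr
  exact (hprim.const_sub _).congr_of_eventuallyEq hsplit.symm

theorem eqOn_Ioi_of_deriv_eq_of_tendsto {f g : ℝ → ℝ} {a l : ℝ}
    (hf : DifferentiableOn ℝ f (Ioi a)) (hg : DifferentiableOn ℝ g (Ioi a))
    (hfg : EqOn (deriv f) (deriv g) (Ioi a)) (hfl : Tendsto f atTop (𝓝 l))
    (hgl : Tendsto g atTop (𝓝 l)) : EqOn f g (Ioi a) := by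
  obtain ⟨c, hc⟩ := isOpen_Ioi.exists_eq_add_of_deriv_eq isPreconnected_Ioi hf hg hfg
  have hgc : Tendsto (fun x => g x + c) atTop (𝓝 l) :=
    hfl.congr' (eventually_gt_atTop a |>.mono fun x hx => hc hx)
  have hc0 : c = 0 := by
    simpa using tendsto_nhds_unique (hgl.add_const c) hgc
  intro x hx
  simpa [hc0] using hc hx

theorem isBigO_rpow_of_tendsto_rpow_neg_mul {K : ℝ → ℝ} {β k : ℝ}
    (h : Tendsto (fun r => r ^ (-β) * K r) atTop (𝓝 k)) : K =O[atTop] (· ^ β) := by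
  have h1 := (isBigO_refl (fun r : ℝ => r ^ β) atTop).mul (h.isBigO_one ℝ)
  simp only [mul_one] at h1
  refine h1.congr' ?_ EventuallyEq.rfl
  filter_upwards [eventually_gt_atTop 0] with r hr
  rw [← mul_assoc, ← rpow_add hr, add_neg_cancel, rpow_zero, one_mul]

section Radial

variable {N η : ℝ} {U g : ℝ → ℝ}

theorem hasDerivAt_rpow_mul_deriv_of_radial {r : ℝ} (hr : 0 < r)
    (hU' : DifferentiableAt ℝ (deriv U) r)
    (hode : deriv (deriv U) r + (N - 1) / r * deriv U r + g r = 0) :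
    HasDerivAt (fun x => x ^ (N - 1) * deriv U x) (-(r ^ (N - 1) * g r)) r := by
  refine ((hasDerivAt_rpow_const (p := N - 1) (Or.inl hr.ne')).mul hU'.hasDerivAt).congr_deriv ?_
  have hpow : r ^ (N - 1) = r ^ (N - 1 - 1) * r := by
    rw [← rpow_add_one hr.ne', sub_add_cancel]
  rw [hpow, eq_sub_of_add_eq (eq_neg_of_add_eq_zero_left hode)]
  field_simp
  ring

theorem hasDerivAt_integral_Ioi_rpow_mul (hg : ContinuousOn g (Ioi 0))
    (hφ : ∀ r > 0, IntegrableOn (fun t => t ^ (N - 1) * g t) (Ioi r)) {r : ℝ} (hr : 0 < r) :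
    HasDerivAt (fun x => ∫ t in Ioi x, t ^ (N - 1) * g t) (-(r ^ (N - 1) * g r)) r :=
  hasDerivAt_integral_Ioi (hφ _ (half_pos hr)) (half_lt_self hr)
    (((continuousOn_id.rpow_const fun _ hx => Or.inl (ne_of_gt hx)).mul hg).continuousAt
      (Ioi_mem_nhds hr))

theorem exists_deriv_eq_of_radial (hN : N ≠ 2) (hU' : DifferentiableOn ℝ (deriv U) (Ioi 0))
    (hode : ∀ r > 0, deriv (deriv U) r + (N - 1) / r * deriv U r + g r = 0)
    (hg : ContinuousOn g (Ioi 0))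
    (hφ : ∀ r > 0, IntegrableOn (fun t => t ^ (N - 1) * g t) (Ioi r)) :
    ∃ η, ∀ r > 0, deriv U r = r ^ (1 - N) * (-(N - 2) * η + ∫ t in Ioi r, t ^ (N - 1) * g t) := by
  have hΦ : ∀ r > 0, HasDerivAt (fun x => ∫ t in Ioi x, t ^ (N - 1) * g t)
      (-(r ^ (N - 1) * g r)) r := fun _ hr => hasDerivAt_integral_Ioi_rpow_mul hg hφ hr
  have hH : ∀ r > 0, HasDerivAt (fun x => x ^ (N - 1) * deriv U x) (-(r ^ (N - 1) * g r)) r :=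
    fun r hr => hasDerivAt_rpow_mul_deriv_of_radial hr
      (hU'.differentiableAt (Ioi_mem_nhds hr)) (hode r hr)
  obtain ⟨L, hL⟩ := isOpen_Ioi.exists_eq_add_of_deriv_eq isPreconnected_Ioi
    (fun r hr => (hH r hr).differentiableAt.differentiableWithinAt)
    (fun r hr => (hΦ r hr).differentiableAt.differentiableWithinAt)
    (fun r hr => (hH r hr).deriv.trans (hΦ r hr).deriv.symm)
  refine ⟨-L / (N - 2), fun r hr => ?_⟩
  have hN2 : N - 2 ≠ 0 := sub_ne_zero.2 hN
  calc deriv U r = r ^ (1 - N) * (r ^ (N - 1) * deriv U r) := by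
        rw [← mul_assoc, ← rpow_add hr, sub_add_sub_cancel', sub_self, rpow_zero, one_mul]
    _ = _ := by
        have hLη : -(N - 2) * (-L / (N - 2)) = L := by field_simp
        rw [show r ^ (N - 1) * deriv U r = _ from hL hr, hLη, add_comm]

theorem integrableOn_Ioi_mul_of_rpow_mul (hN : 2 ≤ N) {r : ℝ} (hr : 0 < r)
    (hφ : IntegrableOn (fun t => t ^ (N - 1) * g t) (Ioi r)) :
    IntegrableOn (fun t => t * g t) (Ioi r) := by
  have hbdd : ∀ᵐ t ∂volume.restrict (Ioi r), ‖t ^ (2 - N)‖ ≤ r ^ (2 - N) :=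
    ae_restrict_of_forall_mem measurableSet_Ioi fun t ht => by
      rw [norm_of_nonneg (rpow_pos_of_pos (hr.trans ht) _).le]
      exact rpow_le_rpow_of_nonpos hr (le_of_lt ht) (by linarith)
  have hmeas : AEStronglyMeasurable (fun t : ℝ => t ^ (2 - N)) (volume.restrict (Ioi r)) :=
    (continuousOn_id.rpow_const fun x hx => Or.inl (ne_of_gt (hr.trans hx))).aestronglyMeasurable
      measurableSet_Ioi
  refine IntegrableOn.congr_fun (Integrable.bdd_mul hφ hmeas hbdd) (fun t ht => ?_)
    measurableSet_Ioi
  rw [← mul_assoc, ← rpow_add (hr.trans ht)]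
  norm_num

theorem hasDerivAt_integral_Ioi_mul (hN : 2 ≤ N) (hg : ContinuousOn g (Ioi 0))
    (hφ : ∀ r > 0, IntegrableOn (fun t => t ^ (N - 1) * g t) (Ioi r)) {r : ℝ} (hr : 0 < r) :
    HasDerivAt (fun x => ∫ t in Ioi x, t * g t) (-(r * g r)) r :=
  hasDerivAt_integral_Ioi (integrableOn_Ioi_mul_of_rpow_mul hN (half_pos hr) (hφ _ (half_pos hr)))
    (half_lt_self hr) ((continuousOn_id.mul hg).continuousAt (Ioi_mem_nhds hr))

theorem rpow_mul_integral_Ioi_mul_le (hN : 2 ≤ N) (hg : ∀ t > 0, 0 ≤ g t) {r : ℝ} (hr : 0 < r)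
    (hφ : IntegrableOn (fun t => t ^ (N - 1) * g t) (Ioi r)) :
    r ^ (N - 2) * ∫ t in Ioi r, t * g t ≤ ∫ t in Ioi r, t ^ (N - 1) * g t := by
  have hle : ∫ t in Ioi r, t * g t ≤ ∫ t in Ioi r, r ^ (2 - N) * (t ^ (N - 1) * g t) := by
    refine setIntegral_mono_on (integrableOn_Ioi_mul_of_rpow_mul hN hr hφ) (hφ.const_mul _)
      measurableSet_Ioi fun t ht => ?_
    have ht0 : 0 < t := hr.trans ht
    calc t * g t = t ^ (2 - N) * (t ^ (N - 1) * g t) := by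
          rw [← mul_assoc, ← rpow_add ht0]; norm_num
      _ ≤ r ^ (2 - N) * (t ^ (N - 1) * g t) :=
          mul_le_mul_of_nonneg_right (rpow_le_rpow_of_nonpos hr (le_of_lt ht) (by linarith))
            (mul_nonneg (rpow_nonneg ht0.le _) (hg t ht0))
  rw [integral_const_mul] at hle
  calc r ^ (N - 2) * ∫ t in Ioi r, t * g t
      ≤ r ^ (N - 2) * (r ^ (2 - N) * ∫ t in Ioi r, t ^ (N - 1) * g t) := by gcongr
    _ = ∫ t in Ioi r, t ^ (N - 1) * g t := by
      rw [← mul_assoc, ← rpow_add hr]; norm_num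

theorem integral_Ioi_mul_pos (hgpos : ∀ t > 0, 0 < g t) {r : ℝ} (hr : 0 < r)
    (hint : IntegrableOn (fun t => t * g t) (Ioi r)) :
    0 < ∫ t in Ioi r, t * g t := by
  have hpos : ∀ t ∈ Ioi r, 0 < t * g t := fun t ht =>
    mul_pos (hr.trans ht) (hgpos t (hr.trans ht))
  have hsupp : Function.support (fun t => t * g t) ∩ Ioi r = Ioi r :=
    inter_eq_right.2 fun t ht => (hpos t ht).ne'
  rw [setIntegral_pos_iff_support_of_nonneg_ae
    (ae_restrict_of_forall_mem measurableSet_Ioi fun t ht => (hpos t ht).le) hint, hsupp]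
  simp

-- The solution of `u'' + (N-1)/r u' + g = 0` that behaves like `η r^{2-N}` at infinity.
def radialProfile (N η : ℝ) (g : ℝ → ℝ) (r : ℝ) : ℝ :=
  r ^ (2 - N) * η - 1 / (N - 2) * ∫ t in Ioi r, (r ^ (2 - N) - t ^ (2 - N)) * t ^ (N - 1) * g t

theorem radialProfile_eq (hN : 2 ≤ N) {r : ℝ} (hr : 0 < r)
    (hφ : IntegrableOn (fun t => t ^ (N - 1) * g t) (Ioi r)) :
    radialProfile N η g r = r ^ (2 - N) * η -
      (r ^ (2 - N) * (∫ t in Ioi r, t ^ (N - 1) * g t) - ∫ t in Ioi r, t * g t) / (N - 2) := by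
  have hsplit : ∫ t in Ioi r, (r ^ (2 - N) - t ^ (2 - N)) * t ^ (N - 1) * g t
      = ∫ t in Ioi r, (r ^ (2 - N) * (t ^ (N - 1) * g t) - t * g t) := by
    refine setIntegral_congr_fun measurableSet_Ioi fun t ht => ?_
    have ht : t ^ (2 - N) * t ^ (N - 1) = t := by
      rw [← rpow_add (hr.trans ht)]; norm_num
    linear_combination (-g t) * ht
  rw [radialProfile, hsplit, integral_sub (hφ.const_mul _)
    (integrableOn_Ioi_mul_of_rpow_mul hN hr hφ), integral_const_mul]
  ring

theorem rpow_mul_radialProfile_eq (hN : 2 ≤ N) {r : ℝ} (hr : 0 < r)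
    (hφ : IntegrableOn (fun t => t ^ (N - 1) * g t) (Ioi r)) :
    r ^ (N - 2) * radialProfile N η g r = η -
      ((∫ t in Ioi r, t ^ (N - 1) * g t) - r ^ (N - 2) * ∫ t in Ioi r, t * g t) / (N - 2) := by
  have h1 : r ^ (N - 2) * r ^ (2 - N) = 1 := by
    rw [← rpow_add hr]; norm_num
  rw [radialProfile_eq hN hr hφ]
  linear_combination (η - (∫ t in Ioi r, t ^ (N - 1) * g t) / (N - 2)) * h1

theorem hasDerivAt_radialProfile (hN : 2 < N) (hg : ContinuousOn g (Ioi 0))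
    (hφ : ∀ r > 0, IntegrableOn (fun t => t ^ (N - 1) * g t) (Ioi r)) {r : ℝ} (hr : 0 < r) :
    HasDerivAt (radialProfile N η g)
      (r ^ (1 - N) * (-(N - 2) * η + ∫ t in Ioi r, t ^ (N - 1) * g t)) r := by
  have hpow := hasDerivAt_rpow_const (p := 2 - N) (Or.inl hr.ne')
  have h := (hpow.mul_const η).sub (((hpow.mul (hasDerivAt_integral_Ioi_rpow_mul hg hφ hr)).sub
    (hasDerivAt_integral_Ioi_mul hN.le hg hφ hr)).div_const (N - 2))
  refine (h.congr_deriv ?_).congr_of_eventuallyEq ?_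
  · have hr1 : r ^ (2 - N) * r ^ (N - 1) = r := by
      rw [← rpow_add hr]; norm_num
    have hN2 : N - 2 ≠ 0 := by linarith
    rw [show 2 - N - 1 = 1 - N by ring]
    field_simp
    linear_combination g r * hr1
  · filter_upwards [Ioi_mem_nhds hr] with x hx
    exact radialProfile_eq hN.le hx (hφ x hx)

theorem tendsto_rpow_mul_radialProfile (hN : 2 < N) (hg : ∀ t > 0, 0 ≤ g t)
    (hφ : ∀ r > 0, IntegrableOn (fun t => t ^ (N - 1) * g t) (Ioi r)) :
    Tendsto (fun r => r ^ (N - 2) * radialProfile N η g r) atTop (𝓝 η) := by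
  have hΦ : Tendsto (fun r => ∫ t in Ioi r, t ^ (N - 1) * g t) atTop (𝓝 0) :=
    tendsto_integral_Ioi_zero tendsto_id
  have hgap : Tendsto (fun r => (∫ t in Ioi r, t ^ (N - 1) * g t) -
      r ^ (N - 2) * ∫ t in Ioi r, t * g t) atTop (𝓝 0) := by
    refine tendsto_of_tendsto_of_tendsto_of_le_of_le' tendsto_const_nhds hΦ ?_ ?_ <;>
      filter_upwards [eventually_gt_atTop 0] with r hr
    · exact sub_nonneg.2 (rpow_mul_integral_Ioi_mul_le hN.le hg hr (hφ r hr))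
    · refine sub_le_self _ (mul_nonneg (rpow_nonneg hr.le _) ?_)
      exact setIntegral_nonneg measurableSet_Ioi fun t ht =>
        mul_nonneg (hr.trans ht).le (hg t (hr.trans ht))
  have hlim := (hgap.div_const (N - 2)).const_sub η
  rw [zero_div, sub_zero] at hlim
  refine hlim.congr' ?_
  filter_upwards [eventually_gt_atTop 0] with r hr
  exact (rpow_mul_radialProfile_eq hN.le hr (hφ r hr)).symm

theorem tendsto_radialProfile_atTop (hN : 2 < N) (hg : ∀ t > 0, 0 ≤ g t)
    (hφ : ∀ r > 0, IntegrableOn (fun t => t ^ (N - 1) * g t) (Ioi r)) :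
    Tendsto (radialProfile N η g) atTop (𝓝 0) := by
  have hdecay : Tendsto (fun r : ℝ => r ^ (-(N - 2))) atTop (𝓝 0) :=
    tendsto_rpow_neg_atTop (by linarith)
  have hlim := hdecay.mul (tendsto_rpow_mul_radialProfile (η := η) hN hg hφ)
  rw [zero_mul] at hlim
  refine hlim.congr' ?_
  filter_upwards [eventually_gt_atTop 0] with r hr
  rw [← mul_assoc, ← rpow_add hr, neg_add_cancel, rpow_zero, one_mul]

theorem strictMonoOn_rpow_mul_radialProfile (hN : 2 < N) (hg : ContinuousOn g (Ioi 0))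
    (hgpos : ∀ t > 0, 0 < g t)
    (hφ : ∀ r > 0, IntegrableOn (fun t => t ^ (N - 1) * g t) (Ioi r)) :
    StrictMonoOn (fun r => r ^ (N - 2) * radialProfile N η g r) (Ioi 0) := by
  have hderiv : ∀ r > 0, HasDerivAt (fun r => r ^ (N - 2) * radialProfile N η g r)
      (r ^ (N - 2 - 1) * ∫ t in Ioi r, t * g t) r := by
    intro r hr
    have h := (((hasDerivAt_integral_Ioi_rpow_mul hg hφ hr).sub
      ((hasDerivAt_rpow_const (p := N - 2) (Or.inl hr.ne')).mul
        (hasDerivAt_integral_Ioi_mul hN.le hg hφ hr))).div_const (N - 2)).const_sub η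
    refine (h.congr_deriv ?_).congr_of_eventuallyEq ?_
    · have hr1 : r ^ (N - 1) = r ^ (N - 2) * r := by
        rw [← rpow_add_one hr.ne']; ring_nf
      have hN2 : N - 2 ≠ 0 := by linarith
      rw [hr1]
      field_simp
      ring
    · filter_upwards [Ioi_mem_nhds hr] with x hx
      exact rpow_mul_radialProfile_eq hN.le hx (hφ x hx)
  refine strictMonoOn_of_deriv_pos (convex_Ioi 0)
    (fun r hr => (hderiv r hr).continuousAt.continuousWithinAt) fun r hr => ?_
  rw [interior_Ioi] at hr
  rw [(hderiv r hr).deriv]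
  exact mul_pos (rpow_pos_of_pos hr _) (integral_Ioi_mul_pos hgpos hr
    (integrableOn_Ioi_mul_of_rpow_mul hN.le hr (hφ r hr)))

theorem eqOn_radialProfile (hN : 2 < N) (hU : DifferentiableOn ℝ U (Ioi 0))
    (hU0 : Tendsto U atTop (𝓝 0)) (hg : ContinuousOn g (Ioi 0)) (hg0 : ∀ t > 0, 0 ≤ g t)
    (hφ : ∀ r > 0, IntegrableOn (fun t => t ^ (N - 1) * g t) (Ioi r))
    (hη : ∀ r > 0, deriv U r = r ^ (1 - N) * (-(N - 2) * η + ∫ t in Ioi r, t ^ (N - 1) * g t)) :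
    EqOn U (radialProfile N η g) (Ioi 0) :=
  eqOn_Ioi_of_deriv_eq_of_tendsto hU
    (fun _ hr => (hasDerivAt_radialProfile hN hg hφ hr).differentiableAt.differentiableWithinAt)
    (fun r hr => (hη r hr).trans (hasDerivAt_radialProfile hN hg hφ hr).deriv.symm)
    hU0 (tendsto_radialProfile_atTop hN hg0 hφ)

end Radial

theorem isBigO_rpow_neg_of_rpow_mul_le {u : ℝ → ℝ} {a M : ℝ} (hu : ∀ᶠ r in atTop, 0 ≤ u r)
    (h : ∀ᶠ r in atTop, r ^ a * u r ≤ M) : u =O[atTop] (· ^ (-a)) := by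
  refine IsBigO.of_bound M ?_
  filter_upwards [hu, h, eventually_gt_atTop 0] with r hu hM hr
  rw [norm_of_nonneg hu, norm_of_nonneg (rpow_pos_of_pos hr _).le, rpow_neg hr.le,
    ← div_eq_mul_inv, le_div_iff₀ (rpow_pos_of_pos hr _), mul_comm]
  exact hM

theorem integrableOn_Ioi_rpow_mul_source {N p β q μ : ℝ} {K U f : ℝ → ℝ} (hp : 0 ≤ p)
    (hK : K =O[atTop] (· ^ β)) (hU : U =O[atTop] (· ^ (2 - N)))
    (hf : f =O[atTop] (· ^ (-q))) (hβ : N - 1 + β + (2 - N) * p < -1) (hq : N < q)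
    (hcont : ContinuousOn (fun t => K t * U t ^ p + μ * f t) (Ioi 0)) {r : ℝ} (hr : 0 < r) :
    IntegrableOn (fun t => t ^ (N - 1) * (K t * U t ^ p + μ * f t)) (Ioi r) := by
  have hUp : (fun t => U t ^ p) =O[atTop] fun t => (t ^ (2 - N)) ^ p :=
    hU.rpow hp (eventually_gt_atTop 0 |>.mono fun t ht => (rpow_pos_of_pos ht _).le)
  have h1 : (fun t => t ^ (N - 1) * (K t * U t ^ p)) =O[atTop]
      fun t => t ^ (N - 1 + β + (2 - N) * p) := by
    refine ((isBigO_refl (· ^ (N - 1)) atTop).mul (hK.mul hUp)).congr' EventuallyEq.rfl ?_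
    filter_upwards [eventually_gt_atTop 0] with t ht
    rw [← rpow_mul ht.le, ← rpow_add ht, ← rpow_add ht, add_assoc]
  have h2 : (fun t => t ^ (N - 1) * (μ * f t)) =O[atTop] fun t => t ^ (N - 1 - q) := by
    refine ((isBigO_refl (· ^ (N - 1)) atTop).mul (hf.const_mul_left μ)).congr' EventuallyEq.rfl ?_
    filter_upwards [eventually_gt_atTop 0] with t ht
    rw [← rpow_add ht, ← sub_eq_add_neg]
  have hO := (h1.add_add h2).congr_left fun t => (mul_add _ _ _).symm
  have hint := (integrableAtFilter_rpow_atTop_iff.2 hβ).norm.add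
    (integrableAtFilter_rpow_atTop_iff.2 (show N - 1 - q < -1 by linarith)).norm
  have hφ : ContinuousOn (fun t => t ^ (N - 1) * (K t * U t ^ p + μ * f t)) (Ici r) :=
    ((continuousOn_id.rpow_const fun _ hx => Or.inl (ne_of_gt hx)).mul hcont).mono
      (Ici_subset_Ioi.2 hr)
  exact ((hφ.locallyIntegrableOn measurableSet_Ici).integrableOn_of_isBigO_atTop hO hint).mono_set
    Ioi_subset_Ici_self

theorem CondKinf.isBigO_rpow {K : ℝ → ℝ} {β kinf : ℝ} (hK : CondKinf K β kinf) :
    K =O[atTop] (· ^ β) :=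
  isBigO_rpow_of_tendsto_rpow_neg_mul hK.2.2

theorem CondFinf.exists_isBigO_rpow_neg {N : ℕ} {f : ℝ → ℝ} (hf : CondFinf N f)
    (hnn : ∀ r : ℝ, 0 < r → 0 ≤ f r) : ∃ q : ℝ, (N : ℝ) < q ∧ f =O[atTop] (· ^ (-q)) := by
  obtain ⟨q, hq, C, -, R0, -, hfq⟩ := hf
  refine ⟨q, hq, IsBigO.of_bound C ?_⟩
  filter_upwards [eventually_gt_atTop R0, eventually_gt_atTop 0] with r hR hr
  rw [norm_of_nonneg (hnn r hr), norm_of_nonneg (rpow_pos_of_pos hr _).le]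
  exact hfq r hR

theorem lt_neg_one_of_pS_lt {N : ℕ} {β p : ℝ} (hN : (2 : ℝ) < N) (hβ : -2 < β)
    (hp : pS N β < p) : (N : ℝ) - 1 + β + (2 - N) * p < -1 := by
  rw [pS, div_lt_iff₀ (by linarith)] at hp
  nlinarith

/-- Lemma 6.2: if `u*_μ` is positive on `(0,∞)` and fast-decaying,
then `η(μ) = lim_{r→∞} r^{N-2} u*_μ(r)` exists, the integral representation formulas
hold, and `r ↦ r^{N-2} u*_μ(r)` is strictly increasing. -/
theorem stmt17 (N : ℕ) (p μ α k0 β kinf : ℝ) (K f U : ℝ → ℝ)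
    (hN : 3 ≤ N) (hp1 : 1 < p) (hμ : 0 ≤ μ)
    (hK0 : CondK0 K α k0) (hKinf : CondKinf K β kinf)
    (hf0 : CondF0 f) (hfinf : CondFinf N f)
    (hp : max (pS N α) (pS N β) < p)
    (hU : SingAux N p μ α k0 K f U)
    (hpos : ∀ r : ℝ, 0 < r → 0 < U r)
    (hfast : ∃ M : ℝ, ∀ᶠ r in atTop, r ^ ((N : ℝ) - 2) * U r ≤ M) :
    ∃ η : ℝ, Tendsto (fun r : ℝ => r ^ ((N : ℝ) - 2) * U r) atTop (𝓝 η) ∧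
      (∀ r : ℝ, 0 < r →
        deriv U r = r ^ (1 - (N : ℝ)) *
          (-((N : ℝ) - 2) * η +
            ∫ s in Ioi r, s ^ ((N : ℝ) - 1) * (K s * U s ^ p + μ * f s))) ∧
      (∀ r : ℝ, 0 < r →
        U r = r ^ (2 - (N : ℝ)) * η - (1 / ((N : ℝ) - 2)) *
          ∫ t in Ioi r,
            (r ^ (2 - (N : ℝ)) - t ^ (2 - (N : ℝ))) * t ^ ((N : ℝ) - 1)
              * (K t * U t ^ p + μ * f t)) ∧
      StrictMonoOn (fun r : ℝ => r ^ ((N : ℝ) - 2) * U r) (Ioi 0) := by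
  obtain ⟨hKpos, hKcont, -, -, -⟩ := hK0
  obtain ⟨hfcont, hfnn, -, -⟩ := hf0
  obtain ⟨q, hq, hfO⟩ := hfinf.exists_isBigO_rpow_neg hfnn
  obtain ⟨hC2, hode, -⟩ := hU
  obtain ⟨M, hM⟩ := hfast
  set g : ℝ → ℝ := fun s => K s * U s ^ p + μ * f s with hg
  have hN2 : (2 : ℝ) < N := by exact_mod_cast hN
  have hgpos : ∀ s > 0, 0 < g s := fun s hs =>
    add_pos_of_pos_of_nonneg (mul_pos (hKpos s hs) (rpow_pos_of_pos (hpos s hs) p))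
      (mul_nonneg hμ (hfnn s hs))
  have hgcont : ContinuousOn g (Ioi 0) :=
    (hKcont.mul (hC2.continuousOn.rpow_const fun _ _ => Or.inr (by linarith))).add
      (continuousOn_const.mul hfcont)
  have hUO : U =O[atTop] (· ^ (-((N : ℝ) - 2))) :=
    isBigO_rpow_neg_of_rpow_mul_le (eventually_gt_atTop 0 |>.mono fun r hr => (hpos r hr).le) hM
  have hφ : ∀ r > 0, IntegrableOn (fun t => t ^ ((N : ℝ) - 1) * g t) (Ioi r) := fun r hr =>
    integrableOn_Ioi_rpow_mul_source (by linarith) hKinf.isBigO_rpow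
      (by simpa only [neg_sub] using hUO) hfO
      (lt_neg_one_of_pS_lt hN2 hKinf.1 ((le_max_right _ _).trans_lt hp)) hq hgcont hr
  have hode' : ∀ r > 0, deriv (deriv U) r + ((N : ℝ) - 1) / r * deriv U r + g r = 0 :=
    fun r hr => by simpa only [hg, max_eq_left (hpos r hr).le, add_assoc] using hode r hr
  obtain ⟨η, hη⟩ := exists_deriv_eq_of_radial hN2.ne'
    ((hC2.deriv_of_isOpen isOpen_Ioi (by norm_num)).differentiableOn one_ne_zero) hode' hgcont hφ
  have hUη : EqOn U (radialProfile N η g) (Ioi 0) :=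
    eqOn_radialProfile hN2 (hC2.differentiableOn (by norm_num))
      (hUO.trans_tendsto (tendsto_rpow_neg_atTop (by linarith))) hgcont
      (fun s hs => (hgpos s hs).le) hφ hη
  refine ⟨η, ?_, hη, fun r hr => hUη hr, ?_⟩
  · refine (tendsto_rpow_mul_radialProfile hN2 (fun s hs => (hgpos s hs).le) hφ).congr' ?_
    filter_upwards [eventually_gt_atTop 0] with r hr
    rw [hUη hr]
  · refine (strictMonoOn_rpow_mul_radialProfile (η := η) hN2 hgcont hgpos hφ).congr fun r hr => ?_
    rw [hUη hr]
end
end
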